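/- In a single-crossing election with an odd number of voters, the pairwise majority relation (x beats y if a strict majority of voters prefers x to y) is a strict linear order on the alternatives, namely it equals the preference order of the median voter. -/

import Mathlib

/-!
For distinct alternatives `x, y`, single-crossing says that the voters preferring `y` to `x`
form an interval of the voter order. If the median voter prefers `x`, this interval misses the
median, so it lies strictly on one side of it and contains at most `z / 2` voters; the other
`z - z / 2 > z / 2` voters prefer `x`. Hence `x ▷ y` whenever the median voter ranks `x` above
`y`, and since both relations are total and asymmetric on distinct alternatives, they coincide.
-/

open Finset

theorem Set.OrdConnected.subset_Iio_or_subset_Ioi {α : Type*} [LinearOrder α] {s : Set α}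
    (hs : s.OrdConnected) {m : α} (hm : m ∉ s) : s ⊆ Set.Iio m ∨ s ⊆ Set.Ioi m := by
  by_contra h
  simp only [not_or, Set.not_subset, Set.mem_Iio, Set.mem_Ioi, not_lt] at h
  obtain ⟨⟨a, ha, hma⟩, ⟨b, hb, hbm⟩⟩ := h
  exact hm (hs.out hb ha ⟨hbm, hma⟩)

theorem Fin.card_le_of_ordConnected_of_notMem {z : ℕ} {s : Finset (Fin z)}
    (hs : (s : Set (Fin z)).OrdConnected) {m : Fin z} (hm : m ∉ s) :
    #s ≤ max (m : ℕ) (z - 1 - m) := by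
  rcases hs.subset_Iio_or_subset_Ioi (by exact_mod_cast hm) with h | h
  · calc #s ≤ #(Iio m) := card_le_card fun v hv => mem_Iio.mpr (h hv)
      _ = m := Fin.card_Iio m
      _ ≤ _ := le_max_left _ _
  · calc #s ≤ #(Ioi m) := card_le_card fun v hv => mem_Ioi.mpr (h hv)
      _ = z - 1 - m := Fin.card_Ioi m
      _ ≤ _ := le_max_right _ _

section Election

variable {C : Type*} {z : ℕ} (pref : Fin z → C → C → Prop) [∀ v, DecidableRel (pref v)]

abbrev supporters (x y : C) : Finset (Fin z) := univ.filter fun v => pref v x y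

variable {pref}

theorem card_supporters_add_card_supporters (hlin : ∀ v, IsStrictTotalOrder C (pref v))
    {x y : C} (hxy : x ≠ y) : #(supporters pref x y) + #(supporters pref y x) = z := by
  have hswap : supporters pref y x = univ.filter fun v => ¬ pref v x y := by
    refine filter_congr fun v _ => ⟨fun h h' => (hlin v).irrefl x ((hlin v).trans _ _ _ h' h),
      fun h => ?_⟩
    have := hlin v
    exact (trichotomous_of (pref v) x y).resolve_left h |>.resolve_left hxy
  rw [hswap, card_filter_add_card_filter_not, card_univ, Fintype.card_fin]

theorem ordConnected_supporters
    (hsc : ∀ x y : C, x ≠ y → ∀ i j k : Fin z, i < j → j < k →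
      pref i x y → pref k x y → pref j x y)
    {x y : C} (hxy : x ≠ y) : (supporters pref x y : Set (Fin z)).OrdConnected :=
  Set.ordConnected_of_Ioo fun i hi k hk _ j hj => by
    simp only [coe_filter, mem_univ, true_and, Set.mem_ofPred_eq] at hi hk ⊢
    exact hsc x y hxy i j k hj.1 hj.2 hi hk

theorem card_supporters_lt_of_median (hz : Odd z) (hlin : ∀ v, IsStrictTotalOrder C (pref v))
    (hsc : ∀ x y : C, x ≠ y → ∀ i j k : Fin z, i < j → j < k →
      pref i x y → pref k x y → pref j x y)
    {m : Fin z} (hm : (m : ℕ) = z / 2) {x y : C} (hxy : pref m x y) :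
    #(supporters pref y x) < #(supporters pref x y) := by
  have hne : x ≠ y := fun h => (hlin m).irrefl x (h ▸ hxy)
  have hmiss : m ∉ supporters pref y x := by
    simpa using fun h => (hlin m).irrefl x ((hlin m).trans _ _ _ hxy h)
  have hle := Fin.card_le_of_ordConnected_of_notMem (ordConnected_supporters hsc hne.symm) hmiss
  have hsum := card_supporters_add_card_supporters hlin hne
  obtain ⟨t, rfl⟩ := hz
  omega

end Election

theorem stmt3_general {C : Type*} {z : ℕ} (hz : Odd z)
    (pref : Fin z → C → C → Prop) [∀ v, DecidableRel (pref v)]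
    (hlin : ∀ v, IsStrictTotalOrder C (pref v))
    (hsc : ∀ x y : C, x ≠ y → ∀ i j k : Fin z, i < j → j < k →
      pref i x y → pref k x y → pref j x y) :
    ∀ m : Fin z, (m : ℕ) = z / 2 →
      ((fun x y : C =>
          (Finset.univ.filter fun v => pref v x y).card >
          (Finset.univ.filter fun v => pref v y x).card) = pref m ∧
       IsStrictTotalOrder C (fun x y : C =>
          (Finset.univ.filter fun v => pref v x y).card >
          (Finset.univ.filter fun v => pref v y x).card)) := by
  intro m hm
  have hmedian {x y : C} : pref m x y → #(supporters pref y x) < #(supporters pref x y) :=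
    card_supporters_lt_of_median hz hlin hsc hm
  have heq : (fun x y : C => #(supporters pref x y) > #(supporters pref y x)) = pref m := by
    funext x y
    refine propext ⟨fun hmaj => ?_, hmedian⟩
    have := hlin m
    rcases trichotomous_of (pref m) x y with h | rfl | h
    · exact h
    · exact absurd hmaj (lt_irrefl _)
    · exact absurd hmaj (hmedian h).asymm
  exact ⟨heq, heq ▸ hlin m⟩

/-- In a single-crossing election with an odd number of voters, the pairwise
majority relation coincides with the preference order of the median voter,
and hence is a strict linear (total) order on the alternatives. -/
theorem stmt3 {C : Type*} [Fintype C] {z : ℕ} (hz : Odd z)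
    (pref : Fin z → C → C → Prop) [∀ v, DecidableRel (pref v)]
    (hlin : ∀ v, IsStrictTotalOrder C (pref v))
    (hsc : ∀ x y : C, x ≠ y → ∀ i j k : Fin z, i < j → j < k →
      pref i x y → pref k x y → pref j x y) :
    ∀ m : Fin z, (m : ℕ) = z / 2 →
      ((fun x y : C =>
          (Finset.univ.filter fun v => pref v x y).card >
          (Finset.univ.filter fun v => pref v y x).card) = pref m ∧
       IsStrictTotalOrder C (fun x y : C =>
          (Finset.univ.filter fun v => pref v x y).card >
          (Finset.univ.filter fun v => pref v y x).card)) :=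
  stmt3_general hz pref hlin hsc
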